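/- arXiv:1709.03251 — 2 statements merged into one kernel-verified Lean document; each statement's English description precedes it below -/
import Mathlib

section
/- Let D be a finite set of lattice points in Z_+^3 (a three-dimensional diagram) and let J_D be the kernel of the K-algebra map from K[T_u : u in D] to K[x_i, y_j, z_k] sending T_{(i,j,k)} to x_i y_j z_k. If a binomial f = T_u T_v - T_{u'} T_{v'} with u,v,u',v' in D lies in J_D and is nonzero, then f is obtained from T_u T_v by switching exactly one of the three coordinates between u and v; i.e., writing u=(i1,j1,k1) and v=(i2,j2,k2), the pair {u',v'} equals {(i2,j1,k1),(i1,j2,k2)} or {(i1,j2,k1),(i2,j1,k2)} or {(i1,j1,k2),(i2,j2,k1)}. -/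
open MvPolynomial

/-- A lattice point of `ℤ₊³`, modeled as a triple of natural numbers. -/
abbrev Pt : Type := ℕ × ℕ × ℕ

/-- The toric map sending `T_{(i,j,k)} ↦ x_i y_j z_k`, where the `x`, `y`, `z`
variables are modeled as the variables `(0,·)`, `(1,·)`, `(2,·)` of a polynomial
ring indexed by `Fin 3 × ℕ`. -/
noncomputable def toricMap (K : Type*) [Field K] :
    MvPolynomial Pt K →ₐ[K] MvPolynomial (Fin 3 × ℕ) K :=
  aeval fun v => X (0, v.1) * X (1, v.2.1) * X (2, v.2.2)

/-- A three-dimensional Ferrers diagram: a finite downward-closed set of points with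
coordinates at least `1`. -/
def IsFerrers (D : Finset Pt) : Prop :=
  ∀ v ∈ D, 1 ≤ v.1 ∧ 1 ≤ v.2.1 ∧ 1 ≤ v.2.2 ∧
    ∀ i j k : ℕ, 1 ≤ i → i ≤ v.1 → 1 ≤ j → j ≤ v.2.1 → 1 ≤ k → k ≤ v.2.2 → (i, j, k) ∈ D

/-- The projection property of a three-dimensional Ferrers diagram. -/
def ProjProp (D : Finset Pt) : Prop :=
  ∀ i j₁ k₁ j₂ k₂ : ℕ, 2 ≤ i → (i, j₁, k₁) ∈ D → (i, j₂, k₂) ∈ D → (i - 1, j₁, k₂) ∈ D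

/-- `{a, b}` is obtained from `{u, v}` by switching exactly one of the three
coordinates. -/
def IsSwitch (u v a b : Pt) : Prop :=
  (a = (v.1, u.2.1, u.2.2) ∧ b = (u.1, v.2.1, v.2.2)) ∨
  (a = (u.1, v.2.1, u.2.2) ∧ b = (v.1, u.2.1, v.2.2)) ∨
  (a = (u.1, u.2.1, v.2.2) ∧ b = (v.1, v.2.1, u.2.2))

/-- The 2-minors ideal `I₂(D)` of a diagram, in the polynomial ring with variables
indexed by all lattice points. -/
noncomputable def I2full (K : Type*) [Field K] (D : Finset Pt) : Ideal (MvPolynomial Pt K) :=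
  Ideal.span {f | ∃ u v a b : Pt, u ∈ D ∧ v ∈ D ∧ a ∈ D ∧ b ∈ D ∧ IsSwitch u v a b ∧
    f = X u * X v - X a * X b}

/-!
Sending every variable outside the `k`-th block to `1` turns the toric relation
`x_{i₁} y_{j₁} z_{k₁} x_{i₂} y_{j₂} z_{k₂} = x_{i₁'} y_{j₁'} z_{k₁'} x_{i₂'} y_{j₂'} z_{k₂'}`
into a relation between two quadratic monomials in one block, so in each coordinate the pair
`{u', v'}` carries the same two values as `{u, v}`. Of the eight ways to match them coordinatewise,
two give `{u', v'} = {u, v}`, i.e. `f = 0`, and the other six are the three switches.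
-/

theorem Multiset.pair_eq_pair_iff {α : Type*} {a b c d : α} :
    ({a, b} : Multiset α) = {c, d} ↔ (a = c ∧ b = d) ∨ (a = d ∧ b = c) := by
  refine ⟨fun h => ?_, ?_⟩
  · rcases Multiset.cons_eq_cons.1 h with ⟨rfl, hbd⟩ | ⟨-, cs, hb, hd⟩
    · exact .inl ⟨rfl, Multiset.singleton_inj.1 hbd⟩
    · rw [Multiset.singleton_eq_cons_iff] at hb hd
      exact .inr ⟨hd.1.symm, hb.1⟩
  · rintro (⟨rfl, rfl⟩ | ⟨rfl, rfl⟩)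
    · rfl
    · exact Multiset.pair_comm _ _

namespace MvPolynomial

variable {σ R : Type*} [CommSemiring R]

theorem X_mul_X_eq_X_mul_X_iff [Nontrivial R] {a b c d : σ} :
    (X a * X b : MvPolynomial σ R) = X c * X d ↔ ({a, b} : Multiset σ) = {c, d} := by
  classical
  refine ⟨fun h => ?_, fun h => ?_⟩
  · simp only [X, monomial_mul, one_mul] at h
    simpa using congrArg Finsupp.toMultiset (monomial_left_injective one_ne_zero h)
  · rcases Multiset.pair_eq_pair_iff.1 h with ⟨rfl, rfl⟩ | ⟨rfl, rfl⟩
    · rfl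
    · exact mul_comm _ _

end MvPolynomial

def coord (k : Fin 3) (p : Pt) : ℕ := ![p.1, p.2.1, p.2.2] k

noncomputable def coordProj (R : Type*) [CommSemiring R] (k : Fin 3) :
    MvPolynomial (Fin 3 × ℕ) R →ₐ[R] MvPolynomial ℕ R :=
  aeval fun p => if p.1 = k then X p.2 else 1

theorem coordProj_toricMap_X {K : Type*} [Field K] (k : Fin 3) (p : Pt) :
    coordProj K k (toricMap K (X p)) = X (coord k p) := by
  fin_cases k <;> simp [coordProj, toricMap, coord]

theorem pair_coord_eq_of_toricMap_eq {K : Type*} [Field K] {u v a b : Pt}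
    (h : toricMap K (X u * X v) = toricMap K (X a * X b)) (k : Fin 3) :
    ({coord k u, coord k v} : Multiset ℕ) = {coord k a, coord k b} := by
  rw [← X_mul_X_eq_X_mul_X_iff (R := K)]
  simpa only [map_mul, coordProj_toricMap_X] using congrArg (coordProj K k) h

theorem pair_eq_or_switch_of_pair_coord_eq {u v a b : Pt}
    (h : ∀ k, ({coord k a, coord k b} : Multiset ℕ) = {coord k u, coord k v}) :
    ({a, b} : Multiset Pt) = {u, v} ∨
    ({a, b} : Multiset Pt) = {(v.1, u.2.1, u.2.2), (u.1, v.2.1, v.2.2)} ∨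
    ({a, b} : Multiset Pt) = {(u.1, v.2.1, u.2.2), (v.1, u.2.1, v.2.2)} ∨
    ({a, b} : Multiset Pt) = {(u.1, u.2.1, v.2.2), (v.1, v.2.1, u.2.2)} := by
  obtain ⟨u1, u2, u3⟩ := u
  obtain ⟨v1, v2, v3⟩ := v
  obtain ⟨a1, a2, a3⟩ := a
  obtain ⟨b1, b2, b3⟩ := b
  have h1 := h 0
  have h2 := h 1
  have h3 := h 2
  simp only [coord, Multiset.pair_eq_pair_iff] at h1 h2 h3 ⊢
  rcases h1 with ⟨rfl, rfl⟩ | ⟨rfl, rfl⟩ <;> rcases h2 with ⟨rfl, rfl⟩ | ⟨rfl, rfl⟩ <;>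
    rcases h3 with ⟨rfl, rfl⟩ | ⟨rfl, rfl⟩ <;> simp

theorem stmt0_general {K : Type*} [Field K] (u v u' v' : Pt)
    (hne : (X u * X v - X u' * X v' : MvPolynomial Pt K) ≠ 0)
    (hker : toricMap K (X u * X v - X u' * X v') = 0) :
    ({u', v'} : Multiset Pt) = {(v.1, u.2.1, u.2.2), (u.1, v.2.1, v.2.2)} ∨
    ({u', v'} : Multiset Pt) = {(u.1, v.2.1, u.2.2), (v.1, u.2.1, v.2.2)} ∨
    ({u', v'} : Multiset Pt) = {(u.1, u.2.1, v.2.2), (v.1, v.2.1, u.2.2)} := by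
  rw [map_sub, sub_eq_zero] at hker
  have hcoord k := (pair_coord_eq_of_toricMap_eq hker k).symm
  refine (pair_eq_or_switch_of_pair_coord_eq hcoord).resolve_left fun hpair => hne ?_
  rw [sub_eq_zero, X_mul_X_eq_X_mul_X_iff, hpair]

/-- a nonzero quadratic binomial `T_u T_v − T_{u'} T_{v'}` in the toric
ideal of a diagram `D` is obtained from `T_u T_v` by switching exactly one of the
three coordinates between `u` and `v`. -/
theorem stmt0 {K : Type*} [Field K] (D : Finset Pt) (u v u' v' : Pt)
    (hu : u ∈ D) (hv : v ∈ D) (hu' : u' ∈ D) (hv' : v' ∈ D)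
    (hne : (X u * X v - X u' * X v' : MvPolynomial Pt K) ≠ 0)
    (hker : toricMap K (X u * X v - X u' * X v') = 0) :
    ({u', v'} : Multiset Pt) = {(v.1, u.2.1, u.2.2), (u.1, v.2.1, v.2.2)} ∨
    ({u', v'} : Multiset Pt) = {(u.1, v.2.1, u.2.2), (v.1, u.2.1, v.2.2)} ∨
    ({u', v'} : Multiset Pt) = {(u.1, u.2.1, v.2.2), (v.1, v.2.1, u.2.2)} :=
  stmt0_general u v u' v' hne hker
end

section
/- Let D be a three-dimensional Ferrers diagram. Then the Krull dimension of the special fiber ring F(I_D) = K[x_i y_j z_k : (i,j,k) ∈ D] equals a_D + b_D + c_D − 2, where a_D, b_D, c_D are the numbers of distinct first, second, and third coordinates appearing in D. -/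
open MvPolynomial

open Finset

/-!
Upper bound: if `y_t` lies in `p_{t+1}` but not in `p_t` along a chain of primes
`p_0 < ⋯ < p_n`, then `y_0, …, y_{n-1}` are algebraically independent, so the Krull dimension is at
most the transcendence degree. Every generator `x_i y_j z_k` is the product
`(x_i y_b z_c) (y_j / y_b) (z_k / z_c)` in the fraction field, so the toric ring lies in an algebra
generated by `a + (b - 1) + (c - 1)` elements.

Lower bound: killing the variables `x_a, …, x_2, y_b, …, y_2, z_c, …, z_2, x_1` one after another
gives a chain of `a + b + c - 2` prime kernels on the toric ring. Each inclusion is strict because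
the diagram contains the points `(i, 1, 1)`, `(1, j, 1)`, `(1, 1, k)`, whose generators involve the
variable being killed and no earlier one.
-/

section KrullDimUpperBound

variable {K A : Type*} [Field K] [CommRing A] [Algebra K A]

lemma aeval_eq_eval₂_finSuccEquiv {n : ℕ} (y : Fin (n + 1) → A)
    (Q : MvPolynomial (Fin (n + 1)) K) :
    aeval y Q = (finSuccEquiv K n Q).eval₂ (aeval (R := K) (Fin.tail y)).toRingHom (y 0) := by
  induction Q using MvPolynomial.induction_on with
  | C a => simp [finSuccEquiv_apply]
  | add p q hp hq => simp [hp, hq]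
  | mul_X p i hp =>
    rw [map_mul, map_mul, Polynomial.eval₂_mul, hp, aeval_X]
    congr 1
    cases i using Fin.cases <;> simp [finSuccEquiv_X_zero, finSuccEquiv_X_succ, Fin.tail]

/-- Expanding `Q` in the first variable, its lowest nonzero coefficient is a polynomial in the
remaining variables whose value lies in `q 1`; induction along the chain makes it zero. -/
theorem eq_zero_of_aeval_mem_of_chain {n : ℕ} (q : Fin (n + 1) → Ideal A)
    (hq : ∀ i, (q i).IsPrime) (hmono : Monotone q) (y : Fin n → A)
    (hy : ∀ i, y i ∈ q i.succ) (hy' : ∀ i, y i ∉ q i.castSucc)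
    {Q : MvPolynomial (Fin n) K} (hQ : aeval y Q ∈ q 0) : Q = 0 := by
  induction n with
  | zero =>
    by_contra hne
    have hc : coeff 0 Q ≠ 0 := fun h => hne (by rw [eq_C_of_isEmpty Q, h, C_0])
    rw [eq_C_of_isEmpty Q, aeval_C] at hQ
    exact (hq 0).ne_top (Ideal.eq_top_of_isUnit_mem _ hQ (hc.isUnit.map _))
  | succ n ih =>
    by_contra hne
    obtain ⟨k, g, hPg, hg⟩ : ∃ (k : ℕ) (g : Polynomial (MvPolynomial (Fin n) K)),
        finSuccEquiv K n Q = Polynomial.X ^ k * g ∧ g.coeff 0 ≠ 0 := by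
      obtain ⟨g, hPg, hg⟩ := Polynomial.exists_eq_pow_rootMultiplicity_mul_and_not_dvd
        (finSuccEquiv K n Q) (by simpa using hne) 0
      exact ⟨_, g, by simpa using hPg, by simpa [Polynomial.X_dvd_iff] using hg⟩
    set φ : MvPolynomial (Fin n) K →+* A := (aeval (R := K) (Fin.tail y)).toRingHom
    have hsplit : aeval y Q = y 0 ^ k * (y 0 * g.divX.eval₂ φ (y 0) + φ (g.coeff 0)) := by
      rw [aeval_eq_eval₂_finSuccEquiv, hPg, Polynomial.eval₂_mul]
      conv_lhs => rw [← Polynomial.X_mul_divX_add g]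
      simp only [Polynomial.eval₂_add, Polynomial.eval₂_mul, Polynomial.eval₂_X_pow,
        Polynomial.eval₂_X, Polynomial.eval₂_C]
      rfl
    rw [hsplit] at hQ
    have hlow : y 0 * g.divX.eval₂ φ (y 0) + φ (g.coeff 0) ∈ q 0 :=
      ((hq 0).mem_or_mem hQ).resolve_left fun h => hy' 0 ((hq 0).mem_of_pow_mem _ h)
    have htail : aeval (Fin.tail y) (g.coeff 0) ∈ q (Fin.succ 0) :=
      (Ideal.add_mem_iff_right _ (Ideal.mul_mem_right _ _ (hy 0))).mp
        (hmono (Fin.zero_le _) hlow)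
    exact hg (ih (q ∘ Fin.succ) (fun i => hq _) (hmono.comp Fin.strictMono_succ.monotone)
      (Fin.tail y) (fun i => hy i.succ)
      (fun i => by rw [Function.comp_apply, Fin.succ_castSucc]; exact hy' i.succ) htail)

theorem algebraicIndependent_of_ltSeries (p : LTSeries (PrimeSpectrum A)) (y : Fin p.length → A)
    (hy : ∀ i, y i ∈ (p i.succ).asIdeal) (hy' : ∀ i, y i ∉ (p i.castSucc).asIdeal) :
    AlgebraicIndependent K y :=
  algebraicIndependent_iff.mpr fun _ hQ =>
    eq_zero_of_aeval_mem_of_chain (fun i => (p i).asIdeal) (fun i => (p i).isPrime)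
      (fun _ _ hij => p.monotone hij) y hy hy' (hQ ▸ zero_mem _)

theorem ringKrullDim_le_of_trdeg_le {n : ℕ} (h : Algebra.trdeg K A ≤ n) :
    ringKrullDim A ≤ n := by
  refine iSup_le fun p => ?_
  choose y hy hy' using fun i : Fin p.length => SetLike.exists_of_lt
    ((PrimeSpectrum.asIdeal_lt_asIdeal _ _).mpr (p.strictMono i.castSucc_lt_succ))
  have hcard := (algebraicIndependent_of_ltSeries (K := K) p y hy hy').lift_cardinalMk_le_trdeg
    |>.trans (Cardinal.lift_le.mpr h)
  simp only [Cardinal.mk_fintype, Fintype.card_fin, Cardinal.lift_natCast, Cardinal.lift_uzero,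
    Nat.cast_le] at hcard
  exact_mod_cast hcard

end KrullDimUpperBound

section KillVars

variable {K : Type*} [Field K] {σ : Type*}

open scoped Classical in
noncomputable def killVars (K : Type*) [Field K] (S : Set σ) :
    MvPolynomial σ K →ₐ[K] MvPolynomial σ K :=
  aeval fun w => if w ∈ S then 0 else X w

open scoped Classical in
@[simp]
lemma killVars_X (S : Set σ) (w : σ) : killVars K S (X w) = if w ∈ S then 0 else X w := by
  simp [killVars]

lemma killVars_X_eq_zero_iff {S : Set σ} {w : σ} : killVars K S (X w) = 0 ↔ w ∈ S := by
  by_cases hw : w ∈ S <;> simp [hw, X_ne_zero]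

lemma killVars_killVars {S T : Set σ} (h : S ⊆ T) (f : MvPolynomial σ K) :
    killVars K T (killVars K S f) = killVars K T f := by
  rw [← AlgHom.comp_apply]
  congr 1
  refine algHom_ext fun w => ?_
  by_cases hw : w ∈ S
  · simp [hw, h hw]
  · simp [hw]

theorem le_ringKrullDim_of_killVars (A : Subalgebra K (MvPolynomial σ K)) (τ : σ → ℕ) (n : ℕ)
    (h : ∀ t < n, ∃ f ∈ A, killVars K {w | τ w ≤ t} f = 0 ∧ killVars K {w | τ w < t} f ≠ 0) :
    n ≤ ringKrullDim A := by
  let q : ℕ → PrimeSpectrum A := fun t =>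
    ⟨RingHom.ker ((killVars K {w | τ w < t}).comp A.val), RingHom.ker_isPrime _⟩
  have hq : ∀ t < n, q t < q (t + 1) := by
    intro t ht
    obtain ⟨f, hfA, hf, hf'⟩ := h t ht
    have hle : (q t).asIdeal ≤ (q (t + 1)).asIdeal := by
      intro g hg
      simp only [q, RingHom.mem_ker, AlgHom.coe_comp, Function.comp_apply] at hg ⊢
      have hsub : {w | τ w < t} ⊆ {w | τ w < t + 1} := fun _ hw => Nat.lt_succ_of_lt hw
      rw [← killVars_killVars hsub, hg, map_zero]
    have hmem : (⟨f, hfA⟩ : A) ∈ (q (t + 1)).asIdeal := by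
      simpa [q, RingHom.mem_ker, Nat.lt_succ_iff] using hf
    have hnmem : (⟨f, hfA⟩ : A) ∉ (q t).asIdeal := by
      simpa [q, RingHom.mem_ker] using hf'
    exact (PrimeSpectrum.asIdeal_lt_asIdeal _ _).mp
      (SetLike.lt_iff_le_and_exists.mpr ⟨hle, _, hmem, hnmem⟩)
  exact Order.LTSeries.length_le_krullDim
    (LTSeries.mk n (fun i => q i) (Fin.strictMono_iff_lt_succ.mpr fun i => hq i i.2))

end KillVars

section Toric

variable {K : Type*} [Field K]

noncomputable def toricMonomial (K : Type*) [Field K] (v : Pt) : MvPolynomial (Fin 3 × ℕ) K :=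
  X (0, v.1) * X (1, v.2.1) * X (2, v.2.2)

lemma killVars_toricMonomial_eq_zero_iff {S : Set (Fin 3 × ℕ)} {v : Pt} :
    killVars K S (toricMonomial K v) = 0 ↔ (0, v.1) ∈ S ∨ (1, v.2.1) ∈ S ∨ (2, v.2.2) ∈ S := by
  simp only [toricMonomial, map_mul, mul_eq_zero, killVars_X_eq_zero_iff, or_assoc]

noncomputable def toricCoordinates (K : Type*) [Field K] (a b c : ℕ) :
    ↥(Icc 1 a) ⊕ ↥(Ico 1 b) ⊕ ↥(Ico 1 c) → FractionRing (MvPolynomial (Fin 3 × ℕ) K) :=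
  let x (w : Fin 3 × ℕ) : FractionRing (MvPolynomial (Fin 3 × ℕ) K) :=
    algebraMap (MvPolynomial (Fin 3 × ℕ) K) _ (X w)
  Sum.elim (fun i => x (0, i) * x (1, b) * x (2, c))
    (Sum.elim (fun j => x (1, j) / x (1, b)) fun k => x (2, k) / x (2, c))

lemma algebraMap_toricMonomial_mem_range {a b c : ℕ} {v : Pt} (h1 : v.1 ∈ Icc 1 a)
    (h2 : v.2.1 ∈ Icc 1 b) (h3 : v.2.2 ∈ Icc 1 c) :
    algebraMap _ (FractionRing _) (toricMonomial K v) ∈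
      (aeval (R := K) (toricCoordinates K a b c)).range := by
  set R := (aeval (R := K) (toricCoordinates K a b c)).range
  set x : Fin 3 × ℕ → FractionRing (MvPolynomial (Fin 3 × ℕ) K) :=
    fun w => algebraMap (MvPolynomial (Fin 3 × ℕ) K) _ (X w)
  have hx0 : ∀ w, x w ≠ 0 := fun w =>
    (map_ne_zero_iff _ (IsFractionRing.injective _ _)).mpr (X_ne_zero w)
  have hx : x (0, v.1) * x (1, b) * x (2, c) ∈ R :=
    ⟨X (.inl ⟨_, h1⟩), by simp [toricCoordinates, x]⟩
  have hy : x (1, v.2.1) / x (1, b) ∈ R := by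
    rcases (mem_Icc.mp h2).2.lt_or_eq with hjb | hjb
    · exact ⟨X (.inr (.inl ⟨_, mem_Ico.mpr ⟨(mem_Icc.mp h2).1, hjb⟩⟩)), by simp [toricCoordinates, x]⟩
    · rw [hjb, div_self (hx0 _)]; exact one_mem R
  have hz : x (2, v.2.2) / x (2, c) ∈ R := by
    rcases (mem_Icc.mp h3).2.lt_or_eq with hkc | hkc
    · exact ⟨X (.inr (.inr ⟨_, mem_Ico.mpr ⟨(mem_Icc.mp h3).1, hkc⟩⟩)), by simp [toricCoordinates, x]⟩
    · rw [hkc, div_self (hx0 _)]; exact one_mem R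
  have key : algebraMap _ _ (toricMonomial K v) =
      x (0, v.1) * x (1, b) * x (2, c) * (x (1, v.2.1) / x (1, b)) * (x (2, v.2.2) / x (2, c)) := by
    have := hx0 (1, b)
    have := hx0 (2, c)
    simp only [toricMonomial, map_mul]
    field_simp
    rfl
  exact key ▸ mul_mem (mul_mem hx hy) hz

theorem trdeg_adjoin_toricMonomial_le {a b c : ℕ} {G : Set Pt}
    (hG : ∀ v ∈ G, v.1 ∈ Icc 1 a ∧ v.2.1 ∈ Icc 1 b ∧ v.2.2 ∈ Icc 1 c) :
    Algebra.trdeg K (Algebra.adjoin K (toricMonomial K '' G)) ≤ (a + (b - 1) + (c - 1) : ℕ) := by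
  let ι := IsScalarTower.toAlgHom K (MvPolynomial (Fin 3 × ℕ) K)
    (FractionRing (MvPolynomial (Fin 3 × ℕ) K))
  set R := (aeval (R := K) (toricCoordinates K a b c)).range
  have hA : Algebra.adjoin K (toricMonomial K '' G) ≤ R.comap ι := Algebra.adjoin_le
    fun _ ⟨v, hv, hfv⟩ => hfv ▸ algebraMap_toricMonomial_mem_range (hG v hv).1 (hG v hv).2.1
      (hG v hv).2.2
  let f := (ι.comp (Algebra.adjoin K (toricMonomial K '' G)).val).codRestrict R fun x => hA x.2
  have hf : Function.Injective f := fun x y hxy =>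
    Subtype.val_injective (IsFractionRing.injective _ _ (congrArg Subtype.val hxy))
  calc Algebra.trdeg K (Algebra.adjoin K (toricMonomial K '' G))
      ≤ Algebra.trdeg K R := trdeg_le_of_injective f hf
    _ ≤ Algebra.trdeg K (MvPolynomial (↥(Icc 1 a) ⊕ ↥(Ico 1 b) ⊕ ↥(Ico 1 c)) K) :=
      trdeg_le_of_surjective _ (aeval (R := K) _).rangeRestrict_surjective
    _ = (a + (b - 1) + (c - 1) : ℕ) := by
      rw [MvPolynomial.trdeg_of_isDomain, Cardinal.mk_fintype, Cardinal.lift_natCast,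
        Fintype.card_sum, Fintype.card_sum, Fintype.card_coe, Fintype.card_coe, Fintype.card_coe,
        Nat.card_Icc, Nat.card_Ico, Nat.card_Ico, add_tsub_cancel_right, add_assoc]

/-- `y_1` and `z_1` are never killed: their time `a + b + c - 2` is the length of the chain. -/
def killTime (a b c : ℕ) : Fin 3 × ℕ → ℕ
  | (0, i) => if i = 1 then a + b + c - 3 else a - i
  | (1, j) => if j = 1 then a + b + c - 2 else a + b - 1 - j
  | (2, k) => if k = 1 then a + b + c - 2 else a + b + c - 2 - k

def chainWitness (a b c t : ℕ) : Pt :=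
  if t + 2 ≤ a then (a - t, 1, 1)
  else if t + 3 ≤ a + b then (1, a + b - 1 - t, 1)
  else if t + 4 ≤ a + b + c then (1, 1, a + b + c - 2 - t)
  else (1, 1, 1)

lemma killVars_toricMonomial_chainWitness {a b c t : ℕ} (ha : 1 ≤ a) (hb : 1 ≤ b) (hc : 1 ≤ c)
    (ht : t < a + b + c - 2) :
    killVars K {w | killTime a b c w ≤ t} (toricMonomial K (chainWitness a b c t)) = 0 ∧
      killVars K {w | killTime a b c w < t} (toricMonomial K (chainWitness a b c t)) ≠ 0 := by
  rw [Ne, killVars_toricMonomial_eq_zero_iff, killVars_toricMonomial_eq_zero_iff]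
  simp only [Set.mem_ofPred_eq]
  unfold chainWitness
  split_ifs <;> simp only [killTime] <;> split_ifs <;> omega

end Toric

theorem Finset.eq_Icc_one_card {S : Finset ℕ} (hS : S.Nonempty)
    (h : ∀ s ∈ S, 1 ≤ s ∧ ∀ t, 1 ≤ t → t ≤ s → t ∈ S) : S = Icc 1 #S := by
  have hmax : S = Icc 1 (S.max' hS) := by
    ext t
    exact ⟨fun ht => mem_Icc.mpr ⟨(h t ht).1, S.le_max' t ht⟩,
      fun ht => (h _ (S.max'_mem hS)).2 t (mem_Icc.mp ht).1 (mem_Icc.mp ht).2⟩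
  rw [hmax]
  simp

namespace IsFerrers

variable {D : Finset Pt} (hD : IsFerrers D)

include hD

lemma image_fst_eq_Icc (hne : D.Nonempty) : D.image Prod.fst = Icc 1 #(D.image Prod.fst) :=
  eq_Icc_one_card (hne.image _) fun s hs => by
    obtain ⟨v, hv, rfl⟩ := mem_image.mp hs
    obtain ⟨h1, h2, h3, hcl⟩ := hD v hv
    exact ⟨h1, fun t ht hts => mem_image.mpr ⟨_, hcl t 1 1 ht hts le_rfl h2 le_rfl h3, rfl⟩⟩

lemma image_snd_fst_eq_Icc (hne : D.Nonempty) :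
    D.image (fun v => v.2.1) = Icc 1 #(D.image fun v => v.2.1) :=
  eq_Icc_one_card (hne.image _) fun s hs => by
    obtain ⟨v, hv, rfl⟩ := mem_image.mp hs
    obtain ⟨h1, h2, h3, hcl⟩ := hD v hv
    exact ⟨h2, fun t ht hts => mem_image.mpr ⟨_, hcl 1 t 1 le_rfl h1 ht hts le_rfl h3, rfl⟩⟩

lemma image_snd_snd_eq_Icc (hne : D.Nonempty) :
    D.image (fun v => v.2.2) = Icc 1 #(D.image fun v => v.2.2) :=
  eq_Icc_one_card (hne.image _) fun s hs => by
    obtain ⟨v, hv, rfl⟩ := mem_image.mp hs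
    obtain ⟨h1, h2, h3, hcl⟩ := hD v hv
    exact ⟨h3, fun t ht hts => mem_image.mpr ⟨_, hcl 1 1 t le_rfl h1 le_rfl h2 ht hts, rfl⟩⟩

lemma mk_one_one_mem {i : ℕ} (hi : i ∈ D.image Prod.fst) : (i, 1, 1) ∈ D := by
  obtain ⟨v, hv, rfl⟩ := mem_image.mp hi
  obtain ⟨h1, h2, h3, hcl⟩ := hD v hv
  exact hcl _ 1 1 h1 le_rfl le_rfl h2 le_rfl h3

lemma one_mk_one_mem {j : ℕ} (hj : j ∈ D.image fun v => v.2.1) : (1, j, 1) ∈ D := by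
  obtain ⟨v, hv, rfl⟩ := mem_image.mp hj
  obtain ⟨h1, h2, h3, hcl⟩ := hD v hv
  exact hcl 1 _ 1 le_rfl h1 h2 le_rfl le_rfl h3

lemma one_one_mk_mem {k : ℕ} (hk : k ∈ D.image fun v => v.2.2) : (1, 1, k) ∈ D := by
  obtain ⟨v, hv, rfl⟩ := mem_image.mp hk
  obtain ⟨h1, h2, h3, hcl⟩ := hD v hv
  exact hcl 1 1 _ le_rfl h1 le_rfl h2 h3 le_rfl

lemma chainWitness_mem {a b c t : ℕ} (hIa : D.image Prod.fst = Icc 1 a)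
    (hIb : D.image (fun v => v.2.1) = Icc 1 b) (hIc : D.image (fun v => v.2.2) = Icc 1 c)
    (ha : 1 ≤ a) : chainWitness a b c t ∈ D := by
  unfold chainWitness
  split_ifs
  · exact hD.mk_one_one_mem (hIa ▸ mem_Icc.mpr ⟨by omega, by omega⟩)
  · exact hD.one_mk_one_mem (hIb ▸ mem_Icc.mpr ⟨by omega, by omega⟩)
  · exact hD.one_one_mk_mem (hIc ▸ mem_Icc.mpr ⟨by omega, by omega⟩)
  · exact hD.mk_one_one_mem (hIa ▸ mem_Icc.mpr ⟨le_rfl, ha⟩)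

end IsFerrers

/-- the Krull dimension of the special fiber ring
`F(I_D) = K[x_i y_j z_k : (i,j,k) ∈ D]` of a three-dimensional Ferrers diagram
equals `a_D + b_D + c_D − 2`. -/
theorem stmt6 {K : Type*} [Field K] (D : Finset Pt) (hD : IsFerrers D)
    (hne : D.Nonempty) :
    ringKrullDim (Algebra.adjoin K
      ((fun v : Pt => (X (0, v.1) * X (1, v.2.1) * X (2, v.2.2) :
        MvPolynomial (Fin 3 × ℕ) K)) '' (↑D : Set Pt))) =
    (((D.image Prod.fst).card + (D.image fun v => v.2.1).card +
      (D.image fun v => v.2.2).card - 2 : ℕ) : WithBot (WithTop ℕ)) := by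
  change ringKrullDim (Algebra.adjoin K (toricMonomial K '' D)) = _
  have hIa := hD.image_fst_eq_Icc hne
  have hIb := hD.image_snd_fst_eq_Icc hne
  have hIc := hD.image_snd_snd_eq_Icc hne
  set a := #(D.image Prod.fst)
  set b := #(D.image fun v => v.2.1)
  set c := #(D.image fun v => v.2.2)
  have ha : 1 ≤ a := card_pos.mpr (hne.image _)
  have hb : 1 ≤ b := card_pos.mpr (hne.image _)
  have hc : 1 ≤ c := card_pos.mpr (hne.image _)
  refine le_antisymm ?_ (le_ringKrullDim_of_killVars _ (killTime a b c) _ fun t ht =>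
    ⟨_, Algebra.subset_adjoin ⟨_, hD.chainWitness_mem hIa hIb hIc ha, rfl⟩,
      killVars_toricMonomial_chainWitness ha hb hc ht⟩)
  have hdim : a + (b - 1) + (c - 1) = a + b + c - 2 := by omega
  rw [← hdim]
  exact ringKrullDim_le_of_trdeg_le (trdeg_adjoin_toricMonomial_le fun v hv =>
    ⟨hIa ▸ mem_image_of_mem _ hv, hIb ▸ mem_image_of_mem _ hv, hIc ▸ mem_image_of_mem _ hv⟩)
end
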